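/- arXiv:2003.01366 — 4 statements merged into one kernel-verified Lean document; each statement's English description precedes it below -/
import Mathlib

section
/- (Proposition 2.12(i), concrete form: closedness of direct integrals of quadratic forms) Let (X,𝒳) be a measurable space, μ a σ-finite measure on X, (Z,𝒵,ν) a σ-finite measure space, and (μ_ζ)_{ζ∈Z} a pseudo-disintegration of μ over ν. For each ζ ∈ Z let Q_ζ be a functional on measurable functions X → ℝ with values in [0,∞] such that: (a) Q_ζ(f) = Q_ζ(g) whenever f = g μ_ζ-almost everywhere; (b) Q_ζ is sequentially lower semicontinuous with respect to L²(μ_ζ)-convergence, i.e. whenever fₙ, f are measurable and ∫(fₙ−f)² dμ_ζ → 0 then Q_ζ(f) ≤ liminf_n Q_ζ(fₙ); (c) for every measurable f : X → ℝ the map ζ ↦ Q_ζ(f) is ν-measurable. Define Q(f) := ∫_Z Q_ζ(f) dν(ζ). Then Q is sequentially lower semicontinuous with respect to L²(μ)-convergence: whenever fₙ, f are measurable, square-integrable with respect to μ, and ∫(fₙ−f)² dμ → 0, one has Q(f) ≤ liminf_n Q(fₙ). -/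
/-!
Pass to a subsequence along which `Q(fₙ)` tends to `liminf Q(fₙ)`. Since
`∫ ‖fₙ - f‖²_{L²(μ_ζ)} dν(ζ) = ‖fₙ - f‖²_{L²(μ)} → 0`, a further subsequence converges in
`L²(μ_ζ)` for `ν`-a.e. `ζ`; lower semicontinuity of each `Q_ζ` and Fatou's lemma in `ζ` conclude.
-/

open Filter MeasureTheory ENNReal

/-- A pseudo-disintegration of `μ` over `ν`: a family `μs ζ` of measures on `X` such that
`ζ ↦ μs ζ A` is `ν`-measurable and `μ A = ∫ μs ζ A dν(ζ)` for every measurable `A`. -/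
def IsPseudoDisintegration {X Z : Type*} [MeasurableSpace X] [MeasurableSpace Z]
    (μ : MeasureTheory.Measure X) (ν : MeasureTheory.Measure Z)
    (μs : Z → MeasureTheory.Measure X) : Prop :=
  (∀ A : Set X, MeasurableSet A → AEMeasurable (fun ζ => μs ζ A) ν) ∧
    (∀ A : Set X, MeasurableSet A → μ A = ∫⁻ ζ, μs ζ A ∂ν)

open Topology

theorem exists_strictMono_ae_tendsto_zero_of_tendsto_lintegral {Z : Type*} [MeasurableSpace Z]
    {ν : Measure Z} {H : ℕ → Z → ℝ≥0∞} (hH : ∀ n, AEMeasurable (H n) ν)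
    (h : Tendsto (fun n => ∫⁻ ζ, H n ζ ∂ν) atTop (𝓝 0)) :
    ∃ ψ : ℕ → ℕ, StrictMono ψ ∧ ∀ᵐ ζ ∂ν, Tendsto (fun k => H (ψ k) ζ) atTop (𝓝 0) := by
  -- along a subsequence with `∫ H (ψ k) dν < 2⁻ᵏ`, the series `∑ₖ H (ψ k)` is integrable
  have hsmall (k : ℕ) : ∀ᶠ n in atTop, ∫⁻ ζ, H n ζ ∂ν < 2⁻¹ ^ k :=
    h.eventually (gt_mem_nhds (ENNReal.pow_pos (by simp) k))
  obtain ⟨ψ, hψ, hψsmall⟩ := extraction_forall_of_eventually hsmall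
  have hsum : ∫⁻ ζ, ∑' k, H (ψ k) ζ ∂ν ≠ ∞ := by
    rw [lintegral_tsum fun k => hH (ψ k)]
    refine ne_top_of_le_ne_top ?_ (ENNReal.tsum_le_tsum fun k => (hψsmall k).le)
    simp [ENNReal.tsum_geometric]
  refine ⟨ψ, hψ, ?_⟩
  filter_upwards [ae_lt_top' (AEMeasurable.tsum fun k => hH (ψ k)) hsum] with ζ hζ
  exact ENNReal.tendsto_atTop_zero_of_tsum_ne_top hζ.ne

namespace IsPseudoDisintegration

variable {X Z : Type*} [MeasurableSpace X] [MeasurableSpace Z]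
  {μ : Measure X} {ν : Measure Z} {μs : Z → Measure X}

theorem aemeasurable_lintegral_and_lintegral_eq (hdis : IsPseudoDisintegration μ ν μs)
    {g : X → ℝ≥0∞} (hg : Measurable g) :
    AEMeasurable (fun ζ => ∫⁻ x, g x ∂μs ζ) ν ∧
      ∫⁻ x, g x ∂μ = ∫⁻ ζ, ∫⁻ x, g x ∂μs ζ ∂ν := by
  refine hg.ennreal_induction ?indicator ?add ?iSup
  case indicator =>
    intro c s hs
    simp only [lintegral_indicator_const hs]
    exact ⟨(hdis.1 _ hs).const_mul c, by rw [hdis.2 _ hs, lintegral_const_mul'' c (hdis.1 _ hs)]⟩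
  case add =>
    intro _ _ _ _ hg hf_ind hg_ind
    simp only [Pi.add_apply, lintegral_add_right _ hg]
    exact ⟨hf_ind.1.add hg_ind.1, by rw [hf_ind.2, hg_ind.2, lintegral_add_left' hf_ind.1]⟩
  case iSup =>
    intro _ hf hmono hf_ind
    simp only [lintegral_iSup hf hmono]
    refine ⟨AEMeasurable.iSup fun n => (hf_ind n).1, ?_⟩
    rw [lintegral_iSup' (fun n => (hf_ind n).1)
      (ae_of_all _ fun _ _ _ hij => lintegral_mono fun x => hmono hij x)]
    simp only [(hf_ind _).2]

theorem exists_strictMono_ae_tendsto_lintegral_zero (hdis : IsPseudoDisintegration μ ν μs)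
    {g : ℕ → X → ℝ≥0∞} (hg : ∀ n, Measurable (g n))
    (h : Tendsto (fun n => ∫⁻ x, g n x ∂μ) atTop (𝓝 0)) :
    ∃ ψ : ℕ → ℕ, StrictMono ψ ∧
      ∀ᵐ ζ ∂ν, Tendsto (fun k => ∫⁻ x, g (ψ k) x ∂μs ζ) atTop (𝓝 0) := by
  have hfib n := hdis.aemeasurable_lintegral_and_lintegral_eq (hg n)
  simp only [(hfib _).2] at h
  exact exists_strictMono_ae_tendsto_zero_of_tendsto_lintegral (fun n => (hfib n).1) h

end IsPseudoDisintegration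

theorem directIntegral_lowerSemicontinuous_general
    {X Z : Type*} [MeasurableSpace X] [MeasurableSpace Z]
    (μ : Measure X) (ν : Measure Z)
    (μs : Z → Measure X) (hdis : IsPseudoDisintegration μ ν μs)
    (Q : Z → (X → ℝ) → ℝ≥0∞)
    (hlsc : ∀ ζ (f : X → ℝ) (fn : ℕ → X → ℝ), Measurable f → (∀ n, Measurable (fn n)) →
      Tendsto (fun n => ∫⁻ x, ENNReal.ofReal ((fn n x - f x) ^ 2) ∂μs ζ) atTop (nhds 0) →
      Q ζ f ≤ atTop.liminf fun n => Q ζ (fn n))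
    (hmeas : ∀ f : X → ℝ, Measurable f → AEMeasurable (fun ζ => Q ζ f) ν)
    (f : X → ℝ) (fn : ℕ → X → ℝ) (hf : Measurable f) (hfn : ∀ n, Measurable (fn n))
    (hconv : Tendsto (fun n => ∫⁻ x, ENNReal.ofReal ((fn n x - f x) ^ 2) ∂μ) atTop (nhds 0)) :
    (∫⁻ ζ, Q ζ f ∂ν) ≤ atTop.liminf fun n => ∫⁻ ζ, Q ζ (fn n) ∂ν := by
  obtain ⟨φ, hφ_liminf, hφ⟩ :=
    exists_seq_tendsto_liminf (f := atTop) (u := fun n => ∫⁻ ζ, Q ζ (fn n) ∂ν)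
  obtain ⟨ψ, hψ, hfib⟩ := hdis.exists_strictMono_ae_tendsto_lintegral_zero
    (g := fun n x => ENNReal.ofReal ((fn (φ n) x - f x) ^ 2))
    (fun n => (((hfn _).sub hf).pow_const 2).ennreal_ofReal) (hconv.comp hφ)
  calc ∫⁻ ζ, Q ζ f ∂ν
      ≤ ∫⁻ ζ, atTop.liminf (fun k => Q ζ (fn (φ (ψ k)))) ∂ν :=
        lintegral_mono_ae <| hfib.mono fun ζ hζ => hlsc ζ f _ hf (fun _ => hfn _) hζ
    _ ≤ atTop.liminf fun k => ∫⁻ ζ, Q ζ (fn (φ (ψ k))) ∂ν :=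
        lintegral_liminf_le' fun _ => hmeas _ (hfn _)
    _ = atTop.liminf fun n => ∫⁻ ζ, Q ζ (fn n) ∂ν :=
        (hφ_liminf.comp hψ.tendsto_atTop).liminf_eq

/-- **Proposition 2.12(i), concrete form**: a direct integral `Q(f) = ∫ Q_ζ(f) dν(ζ)` of
quadratic functionals which are lower semicontinuous along `L²(μ_ζ)`-convergence is itself
lower semicontinuous along `L²(μ)`-convergence, where `(μ_ζ)` is a pseudo-disintegration
of `μ` over `ν`. -/
theorem directIntegral_lowerSemicontinuous
    {X Z : Type*} [MeasurableSpace X] [MeasurableSpace Z]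
    (μ : Measure X) [SigmaFinite μ] (ν : Measure Z) [SigmaFinite ν]
    (μs : Z → Measure X) (hdis : IsPseudoDisintegration μ ν μs)
    (Q : Z → (X → ℝ) → ℝ≥0∞)
    (hcongr : ∀ ζ (f g : X → ℝ), Measurable f → Measurable g →
      f =ᵐ[μs ζ] g → Q ζ f = Q ζ g)
    (hlsc : ∀ ζ (f : X → ℝ) (fn : ℕ → X → ℝ), Measurable f → (∀ n, Measurable (fn n)) →
      Tendsto (fun n => ∫⁻ x, ENNReal.ofReal ((fn n x - f x) ^ 2) ∂μs ζ) atTop (nhds 0) →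
      Q ζ f ≤ atTop.liminf fun n => Q ζ (fn n))
    (hmeas : ∀ f : X → ℝ, Measurable f → AEMeasurable (fun ζ => Q ζ f) ν)
    (f : X → ℝ) (fn : ℕ → X → ℝ) (hf : Measurable f) (hfn : ∀ n, Measurable (fn n))
    (hf2 : ∫⁻ x, ENNReal.ofReal (f x ^ 2) ∂μ < ∞)
    (hfn2 : ∀ n, ∫⁻ x, ENNReal.ofReal (fn n x ^ 2) ∂μ < ∞)
    (hconv : Tendsto (fun n => ∫⁻ x, ENNReal.ofReal ((fn n x - f x) ^ 2) ∂μ) atTop (nhds 0)) :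
    (∫⁻ ζ, Q ζ f ∂ν) ≤ atTop.liminf fun n => ∫⁻ ζ, Q ζ (fn n) ∂ν :=
  directIntegral_lowerSemicontinuous_general μ ν μs hdis Q hlsc hmeas f fn hf hfn hconv
end

section
/- (Theorem 3.4(ii), ν-essential uniqueness of the disintegration) Let (X,𝒳) be a measurable space whose σ-algebra 𝒳 is countably generated, μ a finite measure on X, (Z,𝒵,ν) a σ-finite measure space, and s : X → Z a measurable map. Suppose (μ_ζ)_{ζ∈Z} and (μ'_ζ)_{ζ∈Z} are two families of sub-probability measures on X such that for every A ∈ 𝒳 the maps ζ ↦ μ_ζ(A) and ζ ↦ μ'_ζ(A) are ν-measurable and μ(A ∩ s⁻¹(B)) = ∫_B μ_ζ(A) dν(ζ) = ∫_B μ'_ζ(A) dν(ζ) for all A ∈ 𝒳 and B ∈ 𝒵. Then μ_ζ = μ'_ζ for ν-a.e. ζ ∈ Z. -/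
open Filter MeasureTheory ENNReal

/-- **Theorem 3.4(ii), ν-essential uniqueness of the disintegration**: two disintegrations
of a finite measure `μ` over `ν`, consisting of sub-probability measures and consistent with
the same measurable map `s : X → Z`, agree for `ν`-a.e. `ζ ∈ Z`, provided the σ-algebra of
`X` is countably generated. -/
theorem disintegration_ae_unique
    {X Z : Type*} [MeasurableSpace X] [MeasurableSpace.CountablyGenerated X]
    [MeasurableSpace Z]
    (μ : Measure X) [IsFiniteMeasure μ] (ν : Measure Z) [SigmaFinite ν]
    (s : X → Z) (hs : Measurable s)
    (μs μs' : Z → Measure X)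
    (hsub : ∀ ζ, μs ζ Set.univ ≤ 1) (hsub' : ∀ ζ, μs' ζ Set.univ ≤ 1)
    (hmeas : ∀ A : Set X, MeasurableSet A → AEMeasurable (fun ζ => μs ζ A) ν)
    (hmeas' : ∀ A : Set X, MeasurableSet A → AEMeasurable (fun ζ => μs' ζ A) ν)
    (hdis : ∀ A : Set X, MeasurableSet A → ∀ B : Set Z, MeasurableSet B →
      μ (A ∩ s ⁻¹' B) = ∫⁻ ζ in B, μs ζ A ∂ν)
    (hdis' : ∀ A : Set X, MeasurableSet A → ∀ B : Set Z, MeasurableSet B →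
      μ (A ∩ s ⁻¹' B) = ∫⁻ ζ in B, μs' ζ A ∂ν) :
    ∀ᵐ ζ ∂ν, μs ζ = μs' ζ := by
  -- enumerate a countable generating family
  obtain ⟨f, hf⟩ := (MeasurableSpace.countable_countableGeneratingSet (α := X)).exists_eq_range
    (MeasurableSpace.nonempty_countableGeneratingSet (α := X))
  -- the countable π-system of finite intersections
  set T : Set (Set X) := Set.range (fun F : Finset ℕ => ⋂ i ∈ F, f i) with hT
  have hfmeas : ∀ i, MeasurableSet (f i) := fun i =>
    MeasurableSpace.measurableSet_countableGeneratingSet (by rw [hf]; exact ⟨i, rfl⟩)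
  have hTmeas : ∀ A ∈ T, MeasurableSet A := by
    rintro A ⟨F, rfl⟩
    exact F.measurableSet_biInter fun i _ => hfmeas i
  have hTpi : IsPiSystem T := by
    rintro A ⟨F, rfl⟩ B ⟨G, rfl⟩ -
    refine ⟨F ∪ G, ?_⟩
    ext x
    simp [Finset.mem_union, or_imp, forall_and]
  have hTgen : ‹MeasurableSpace X› = MeasurableSpace.generateFrom T := by
    refine le_antisymm ?_ (MeasurableSpace.generateFrom_le hTmeas)
    conv_lhs => rw [← MeasurableSpace.generateFrom_countableGeneratingSet (α := X)]
    refine MeasurableSpace.generateFrom_le fun A hA => ?_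
    rw [hf] at hA
    obtain ⟨i, rfl⟩ := hA
    apply MeasurableSpace.measurableSet_generateFrom
    exact ⟨{i}, by simp⟩
  -- a.e. equality on each measurable set
  have key : ∀ A : Set X, MeasurableSet A → ∀ᵐ ζ ∂ν, μs ζ A = μs' ζ A := by
    intro A hA
    refine ae_eq_of_forall_setLIntegral_eq_of_sigmaFinite₀ (hmeas A hA) (hmeas' A hA) ?_
    intro B hB _
    rw [← hdis A hA B hB, hdis' A hA B hB]
  have hTcount : T.Countable := Set.countable_range _
  have hball : ∀ᵐ ζ ∂ν, ∀ A ∈ T, μs ζ A = μs' ζ A :=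
    (ae_ball_iff hTcount).2 fun A hA => key A (hTmeas A hA)
  filter_upwards [hball, key Set.univ MeasurableSet.univ] with ζ h huniv
  haveI : IsFiniteMeasure (μs ζ) := ⟨lt_of_le_of_lt (hsub ζ) one_lt_top⟩
  exact ext_of_generate_finite T hTgen hTpi h huniv
end

section
/- (Claim 3 in the proof of Theorem 3.11: projective uniqueness of pseudo-disintegrations) Let (X,𝒳) be a measurable space, μ a σ-finite measure on X, (Z,𝒵) a measurable space carrying two mutually absolutely continuous σ-finite measures ν and ν', and s : X → Z a measurable map. Let (μ_ζ)_{ζ∈Z} and (μ'_ζ)_{ζ∈Z} be families of measures on X such that for every A ∈ 𝒳 the maps ζ ↦ μ_ζ(A) and ζ ↦ μ'_ζ(A) are measurable and μ(A ∩ s⁻¹(B)) = ∫_B μ_ζ(A) dν(ζ) = ∫_B μ'_ζ(A) dν'(ζ) for all A ∈ 𝒳 and B ∈ 𝒵. Then for every A ∈ 𝒳, one has μ_ζ(A) = (dν'/dν)(ζ) · μ'_ζ(A) for ν-a.e. ζ ∈ Z, where dν'/dν denotes the Radon–Nikodym derivative of ν' with respect to ν. -/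
open Filter MeasureTheory ENNReal

/-- **Claim 3 in the proof of Theorem 3.11**: projective uniqueness of pseudo-disintegrations.
If `(μ_ζ)` and `(μ'_ζ)` are pseudo-disintegrations of the same σ-finite measure `μ`,
consistent with the same map `s : X → Z`, over two equivalent σ-finite measures `ν ∼ ν'`,
then `μ_ζ(A) = (dν'/dν)(ζ) · μ'_ζ(A)` for `ν`-a.e. `ζ`, for every measurable `A`. -/
theorem pseudoDisintegration_projectively_unique
    {X Z : Type*} [MeasurableSpace X] [MeasurableSpace Z]
    (μ : Measure X) [SigmaFinite μ]
    (ν ν' : Measure Z) [SigmaFinite ν] [SigmaFinite ν']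
    (hac : ν ≪ ν') (hac' : ν' ≪ ν)
    (s : X → Z) (hs : Measurable s)
    (μs μs' : Z → Measure X)
    (hmeas : ∀ A : Set X, MeasurableSet A → Measurable (fun ζ => μs ζ A))
    (hmeas' : ∀ A : Set X, MeasurableSet A → Measurable (fun ζ => μs' ζ A))
    (hdis : ∀ A : Set X, MeasurableSet A → ∀ B : Set Z, MeasurableSet B →
      μ (A ∩ s ⁻¹' B) = ∫⁻ ζ in B, μs ζ A ∂ν)
    (hdis' : ∀ A : Set X, MeasurableSet A → ∀ B : Set Z, MeasurableSet B →
      μ (A ∩ s ⁻¹' B) = ∫⁻ ζ in B, μs' ζ A ∂ν') :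
    ∀ A : Set X, MeasurableSet A →
      ∀ᵐ ζ ∂ν, μs ζ A = ν'.rnDeriv ν ζ * μs' ζ A := by
  intro A hA
  refine ae_eq_of_forall_setLIntegral_eq_of_sigmaFinite (hmeas A hA)
    ((ν'.measurable_rnDeriv ν).mul (hmeas' A hA)) (fun B hB _ => ?_)
  have h1 : ∫⁻ ζ in B, ν'.rnDeriv ν ζ * μs' ζ A ∂ν = ∫⁻ ζ in B, μs' ζ A ∂ν' := by
    conv_rhs => rw [← Measure.withDensity_rnDeriv_eq ν' ν hac']
    rw [restrict_withDensity hB,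
      lintegral_withDensity_eq_lintegral_mul _ (ν'.measurable_rnDeriv ν) (hmeas' A hA)]
    rfl
  rw [h1, ← hdis A hA B hB, ← hdis' A hA B hB]
end

section
/- (Proposition 3.15(iii), forward direction: recurrence passes to the fibers of a superposition) Let (X,𝒳) be a measurable space, μ a σ-finite measure on X, (Z,𝒵,ν) a σ-finite measure space, and (μ_ζ)_{ζ∈Z} a pseudo-disintegration of μ over ν. For each ζ ∈ Z let E_ζ be a functional on measurable functions X → ℝ with values in [0,∞] such that E_ζ(f) = E_ζ(g) whenever f = g μ_ζ-a.e., and such that ζ ↦ E_ζ(f) is ν-measurable for every measurable f; define E(f) := ∫_Z E_ζ(f) dν(ζ). Suppose there is a sequence of measurable functions uₙ : X → [0,1] with uₙ → 1 μ-almost everywhere and E(uₙ) → 0. Then there exists a subsequence (u_{n_k})_k such that for ν-a.e. ζ ∈ Z one has u_{n_k} → 1 μ_ζ-almost everywhere and E_ζ(u_{n_k}) → 0 as k → ∞. -/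
open Filter MeasureTheory ENNReal

/-- **Proposition 3.15(iii), forward direction**: recurrence passes to the fibers of a
superposition. If `E(f) = ∫ E_ζ(f) dν(ζ)` and there is a sequence of measurable
`[0,1]`-valued functions `uₙ → 1` `μ`-a.e. with `E(uₙ) → 0`, then along a subsequence one
has, for `ν`-a.e. `ζ`, `u_{n_k} → 1` `μ_ζ`-a.e. and `E_ζ(u_{n_k}) → 0`. -/
theorem recurrence_passes_to_fibers
    {X Z : Type*} [MeasurableSpace X] [MeasurableSpace Z]
    (μ : Measure X) [SigmaFinite μ] (ν : Measure Z) [SigmaFinite ν]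
    (μs : Z → Measure X) (hdis : IsPseudoDisintegration μ ν μs)
    (E : Z → (X → ℝ) → ℝ≥0∞)
    (hcongr : ∀ ζ (f g : X → ℝ), Measurable f → Measurable g →
      f =ᵐ[μs ζ] g → E ζ f = E ζ g)
    (hmeas : ∀ f : X → ℝ, Measurable f → AEMeasurable (fun ζ => E ζ f) ν)
    (u : ℕ → X → ℝ) (hu : ∀ n, Measurable (u n))
    (hrange : ∀ n x, u n x ∈ Set.Icc (0 : ℝ) 1)
    (hconv : ∀ᵐ x ∂μ, Tendsto (fun n => u n x) atTop (nhds 1))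
    (hE : Tendsto (fun n => ∫⁻ ζ, E ζ (u n) ∂ν) atTop (nhds 0)) :
    ∃ φ : ℕ → ℕ, StrictMono φ ∧
      ∀ᵐ ζ ∂ν, (∀ᵐ x ∂μs ζ, Tendsto (fun k => u (φ k) x) atTop (nhds 1)) ∧
        Tendsto (fun k => E ζ (u (φ k))) atTop (nhds 0) := by
  -- the set of convergence is measurable
  have hTmeas : MeasurableSet { x : X | Tendsto (fun n => u n x) atTop (nhds (1 : ℝ)) } :=
    measurableSet_tendsto _ hu
  set T := { x : X | Tendsto (fun n => u n x) atTop (nhds (1 : ℝ)) }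
  have hNmeas : MeasurableSet Tᶜ := hTmeas.compl
  have hμN : μ Tᶜ = 0 := by
    have := ae_iff.mp hconv
    simpa [T, Set.compl_setOf] using this
  have hint : ∫⁻ ζ, μs ζ Tᶜ ∂ν = 0 := (hdis.2 _ hNmeas).symm.trans hμN
  have hfib : ∀ᵐ ζ ∂ν, μs ζ Tᶜ = 0 :=
    (lintegral_eq_zero_iff' (hdis.1 _ hNmeas)).mp hint
  -- choose the subsequence
  have hext : ∀ k : ℕ, ∀ᶠ n in atTop, ∫⁻ ζ, E ζ (u n) ∂ν < (2 : ℝ≥0∞)⁻¹ ^ k := by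
    intro k
    exact hE.eventually_lt_const (ENNReal.pow_pos (by simp) k)
  obtain ⟨φ, hφmono, hφ⟩ := extraction_forall_of_eventually hext
  refine ⟨φ, hφmono, ?_⟩
  -- sum of integrals is finite
  have hsum : ∫⁻ ζ, ∑' k, E ζ (u (φ k)) ∂ν < ∞ := by
    rw [lintegral_tsum (fun k => hmeas _ (hu _))]
    calc ∑' k, ∫⁻ ζ, E ζ (u (φ k)) ∂ν ≤ ∑' k : ℕ, (2 : ℝ≥0∞)⁻¹ ^ k :=
          ENNReal.tsum_le_tsum fun k => (hφ k).le
      _ < ∞ := by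
          rw [ENNReal.tsum_geometric, ENNReal.inv_lt_top, tsub_pos_iff_lt]
          exact ENNReal.inv_lt_one.mpr one_lt_two
  have hae : ∀ᵐ ζ ∂ν, (∑' k, E ζ (u (φ k))) < ∞ :=
    ae_lt_top' (AEMeasurable.ennreal_tsum fun k => hmeas _ (hu _)) hsum.ne
  filter_upwards [hfib, hae] with ζ hζ hζ'
  constructor
  · have h2 : ∀ᵐ x ∂μs ζ, x ∈ T := ae_iff.mpr (by simpa [T, Set.compl_setOf] using hζ)
    filter_upwards [h2] with x hx using hx.comp hφmono.tendsto_atTop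
  · exact ENNReal.tendsto_atTop_zero_of_tsum_ne_top hζ'.ne
end
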